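/- For all real c1, c3, each of the gates A(c1, π/2−c1, c3), A(c1, c1−π/2, c3), and (for all real c1, c2) A(c1, c2, π/2−c2) is a perfect entangler. -/

import Mathlib

open Matrix Complex

noncomputable section

/-- Pauli matrix σx. -/
def sigmaX : Matrix (Fin 2) (Fin 2) ℂ := !![0, 1; 1, 0]
/-- Pauli matrix σy. -/
def sigmaY : Matrix (Fin 2) (Fin 2) ℂ := !![0, -I; I, 0]
/-- Pauli matrix σz. -/
def sigmaZ : Matrix (Fin 2) (Fin 2) ℂ := !![1, 0; 0, -1]

/-- Kronecker product of two 2×2 complex matrices, as a 4×4 matrix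
(row-major ordering: entry ((2i+k),(2j+l)) is `A i j * B k l`). -/
def kron (A B : Matrix (Fin 2) (Fin 2) ℂ) : Matrix (Fin 4) (Fin 4) ℂ :=
  Matrix.of fun i j =>
    A ⟨i.val / 2, by have := i.isLt; omega⟩ ⟨j.val / 2, by have := j.isLt; omega⟩ *
    B ⟨i.val % 2, by have := i.isLt; omega⟩ ⟨j.val % 2, by have := j.isLt; omega⟩

/-- The matrix P = -(1/2) σy⊗σy. -/
def Pmat : Matrix (Fin 4) (Fin 4) ℂ := (-(1/2) : ℂ) • kron sigmaY sigmaY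

/-- Ent ψ = ψᵀ P ψ. -/
def Ent (ψ : Fin 4 → ℂ) : ℂ := ∑ i, ∑ j, ψ i * Pmat i j * ψ j

/-- A 4×4 unitary U is a perfect entangler if some unit vector ψ with Ent ψ = 0
satisfies |Ent (Uψ)| = 1/2. -/
def PerfectEntangler (U : Matrix (Fin 4) (Fin 4) ℂ) : Prop :=
  ∃ ψ : Fin 4 → ℂ, (∑ i, ‖ψ i‖ ^ 2) = 1 ∧ Ent ψ = 0 ∧
    ‖Ent (U.mulVec ψ)‖ = 1 / 2

/-- The gate A(c1,c2,c3) = exp((i/2)(c1 σx⊗σx + c2 σy⊗σy + c3 σz⊗σz)). -/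
def Agate (c1 c2 c3 : ℝ) : Matrix (Fin 4) (Fin 4) ℂ :=
  NormedSpace.exp ((I / 2) •
    ((c1 : ℂ) • kron sigmaX sigmaX + (c2 : ℂ) • kron sigmaY sigmaY +
      (c3 : ℂ) • kron sigmaZ sigmaZ))

/-- The (unnormalized) magic/Bell basis change matrix. -/
def Vmat : Matrix (Fin 4) (Fin 4) ℂ := !![1,0,0,1; 0,1,1,0; 0,1,-1,0; 1,0,0,-1]

/-- (i/2) times the eigenvalues of the Hamiltonian on the Bell basis. -/
def dfun (c1 c2 c3 : ℝ) : Fin 4 → ℂ :=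
  ![I*(c1-c2+c3)/2, I*(c1+c2-c3)/2, -I*(c1+c2+c3)/2, I*(-c1+c2+c3)/2]

set_option maxHeartbeats 2000000 in
lemma ham_eq (c1 c2 c3 : ℝ) :
    (I / 2) • ((c1 : ℂ) • kron sigmaX sigmaX + (c2 : ℂ) • kron sigmaY sigmaY +
      (c3 : ℂ) • kron sigmaZ sigmaZ)
    = Vmat * Matrix.diagonal (dfun c1 c2 c3) * ((1/2 : ℂ) • Vmat) := by
  rw [Matrix.mul_assoc]
  ext i j
  fin_cases i <;> fin_cases j <;>
    · simp only [kron, sigmaX, sigmaY, sigmaZ, Vmat, dfun, Matrix.mul_apply, Matrix.diagonal_apply,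
      Fin.sum_univ_four, Matrix.diagonal_mul, Matrix.smul_apply, Matrix.add_apply,
      Matrix.of_apply, Matrix.cons_val', Matrix.cons_val_zero, Matrix.cons_val_one,
      Matrix.head_cons, Matrix.head_fin_const, Matrix.empty_val',
      Matrix.cons_val_fin_one, smul_eq_mul, Fin.mk_zero, Fin.mk_one]
      norm_num
      try simp
      try ring

set_option maxHeartbeats 2000000 in
lemma VmatUnit : Vmat * ((1/2 : ℂ) • Vmat) = 1 ∧ ((1/2 : ℂ) • Vmat) * Vmat = 1 := by
  constructor <;>
  · ext i j
    fin_cases i <;> fin_cases j <;>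
      · simp only [Vmat, Matrix.mul_apply, Fin.sum_univ_four, Matrix.smul_apply,
          Matrix.one_apply, Matrix.cons_val', Matrix.cons_val_zero, Matrix.cons_val_one,
          Matrix.head_cons, Matrix.empty_val', Matrix.cons_val_fin_one, smul_eq_mul]
        norm_num
        try simp
        try ring

/-- The Bell matrix as a unit. -/
def Vunit : (Matrix (Fin 4) (Fin 4) ℂ)ˣ :=
  ⟨Vmat, (1/2 : ℂ) • Vmat, VmatUnit.1, VmatUnit.2⟩

lemma agate_eq (c1 c2 c3 : ℝ) :
    Agate c1 c2 c3
      = Vmat * Matrix.diagonal (fun k => Complex.exp (dfun c1 c2 c3 k)) * ((1/2 : ℂ) • Vmat) := by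
  rw [Agate, ham_eq]
  have h1 := Matrix.exp_units_conj Vunit (Matrix.diagonal (dfun c1 c2 c3))
  have h2 : NormedSpace.exp (Matrix.diagonal (dfun c1 c2 c3))
      = Matrix.diagonal (fun k => Complex.exp (dfun c1 c2 c3 k)) := by
    rw [Matrix.exp_diagonal, Pi.exp_def, Complex.exp_eq_exp_ℂ]
  rw [h2] at h1
  exact h1

lemma ent_eq (ψ : Fin 4 → ℂ) : Ent ψ = ψ 0 * ψ 3 - ψ 1 * ψ 2 := by
  simp only [Ent, Pmat, kron, sigmaY, Fin.sum_univ_four, Matrix.smul_apply, Matrix.of_apply,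
    Matrix.cons_val', Matrix.cons_val_zero, Matrix.cons_val_one, Matrix.head_cons,
    Matrix.empty_val', Matrix.cons_val_fin_one, smul_eq_mul,
    show ((3:Fin 4):ℕ) = 3 from rfl, show ((2:Fin 4):ℕ) = 2 from rfl,
    show ((1:Fin 4):ℕ) = 1 from rfl, show ((0:Fin 4):ℕ) = 0 from rfl]
  norm_num
  ring

lemma key_abs (x y : ℝ) (h : x - y = Real.pi) :
    ‖Complex.exp (I * x) - Complex.exp (I * y)‖ = 2 := by
  have hc : ((x : ℂ)) - y = Real.pi := by exact_mod_cast congrArg (fun t : ℝ => (t:ℂ)) h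
  have hx : (I * (x:ℂ)) = I * (y:ℂ) + Real.pi * I := by linear_combination I * hc
  rw [hx, Complex.exp_add, Complex.exp_pi_mul_I]
  have h2 : Complex.exp (I * (y:ℂ)) * (-1) - Complex.exp (I * (y:ℂ))
      = -(2 * Complex.exp (I * (y:ℂ))) := by ring
  rw [h2, norm_neg, norm_mul, Complex.norm_exp]
  simp

set_option maxHeartbeats 2000000 in
lemma entU0 (e : Fin 4 → ℂ) :
    Ent ((Vmat * Matrix.diagonal e * ((1/2 : ℂ) • Vmat)).mulVec ![1,0,0,0])
      = (e 0 * e 0 - e 3 * e 3) / 4 := by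
  rw [ent_eq]
  simp only [Vmat, Matrix.mulVec, dotProduct, Matrix.mul_apply, Matrix.diagonal_apply,
    Fin.sum_univ_four, Matrix.smul_apply, Matrix.cons_val', Matrix.cons_val_zero,
    Matrix.cons_val_one, Matrix.head_cons, Matrix.empty_val', Matrix.cons_val_fin_one,
    smul_eq_mul]
  norm_num
  try simp
  ring

set_option maxHeartbeats 2000000 in
lemma entU1 (e : Fin 4 → ℂ) :
    Ent ((Vmat * Matrix.diagonal e * ((1/2 : ℂ) • Vmat)).mulVec ![0,1,0,0])
      = (e 2 * e 2 - e 1 * e 1) / 4 := by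
  rw [ent_eq]
  simp only [Vmat, Matrix.mulVec, dotProduct, Matrix.mul_apply, Matrix.diagonal_apply,
    Fin.sum_univ_four, Matrix.smul_apply, Matrix.cons_val', Matrix.cons_val_zero,
    Matrix.cons_val_one, Matrix.head_cons, Matrix.empty_val', Matrix.cons_val_fin_one,
    smul_eq_mul]
  norm_num
  try simp
  ring

set_option maxHeartbeats 2000000 in
lemma entU3 (e : Fin 4 → ℂ) :
    Ent ((Vmat * Matrix.diagonal e * ((1/2 : ℂ) • Vmat)).mulVec ![1/2,1/2,-(1/2),-(1/2)])
      = (e 2 * e 2 - e 3 * e 3) / 4 := by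
  rw [ent_eq]
  simp only [Vmat, Matrix.mulVec, dotProduct, Matrix.mul_apply, Matrix.diagonal_apply,
    Fin.sum_univ_four, Matrix.smul_apply, Matrix.cons_val', Matrix.cons_val_zero,
    Matrix.cons_val_one, Matrix.head_cons, Matrix.empty_val', Matrix.cons_val_fin_one,
    smul_eq_mul]
  norm_num
  try simp
  ring

lemma abs_goal' (u v : ℂ) (x y : ℝ) (hu : u * u = Complex.exp (I * x))
    (hv : v * v = Complex.exp (I * y)) (h : y - x = Real.pi) :
    ‖(u * u - v * v) / 4‖ = 1 / 2 := by
  rw [hu, hv, norm_div, norm_sub_rev, key_abs y x h]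
  norm_num

lemma abs_goal (u v : ℂ) (x y : ℝ) (hu : u * u = Complex.exp (I * x))
    (hv : v * v = Complex.exp (I * y)) (h : x - y = Real.pi) :
    ‖(u * u - v * v) / 4‖ = 1 / 2 := by
  rw [hu, hv, norm_div, key_abs x y h]
  norm_num

lemma exp_exp (c1 c2 c3 : ℝ) (k : Fin 4) (z : ℝ) (hz : dfun c1 c2 c3 k + dfun c1 c2 c3 k = I * z) :
    Complex.exp (dfun c1 c2 c3 k) * Complex.exp (dfun c1 c2 c3 k) = Complex.exp (I * z) := by
  rw [← Complex.exp_add, hz]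

/-- For all real c1, c3 (resp. c1, c2), the gates A(c1, π/2−c1, c3),
A(c1, c1−π/2, c3) and A(c1, c2, π/2−c2) are perfect entanglers. -/
theorem perfect_entangler_families :
    (∀ c1 c3 : ℝ, PerfectEntangler (Agate c1 (Real.pi / 2 - c1) c3)) ∧
    (∀ c1 c3 : ℝ, PerfectEntangler (Agate c1 (c1 - Real.pi / 2) c3)) ∧
    (∀ c1 c2 : ℝ, PerfectEntangler (Agate c1 c2 (Real.pi / 2 - c2))) := by
  refine ⟨fun c1 c3 => ?_, fun c1 c3 => ?_, fun c1 c2 => ?_⟩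
  · -- family 1 : c2 = π/2 - c1, use ψ = e1
    set c2 : ℝ := Real.pi / 2 - c1 with hc2
    refine ⟨![0,1,0,0], ?_, ?_, ?_⟩
    · simp [Fin.sum_univ_four]
    · rw [ent_eq]; simp
    · rw [agate_eq, entU1]
      refine abs_goal' _ _ (-(c1+c2+c3)) (c1+c2-c3)
        (exp_exp c1 c2 c3 2 _ ?_) (exp_exp c1 c2 c3 1 _ ?_) ?_
      · simp [dfun]; try push_cast; try ring
      · simp [dfun]; try push_cast; try ring
      · rw [hc2]; ring
  · -- family 2 : c2 = c1 - π/2, use ψ = e0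
    set c2 : ℝ := c1 - Real.pi / 2 with hc2
    refine ⟨![1,0,0,0], ?_, ?_, ?_⟩
    · simp [Fin.sum_univ_four]
    · rw [ent_eq]; simp
    · rw [agate_eq, entU0]
      refine abs_goal _ _ (c1-c2+c3) (-c1+c2+c3)
        (exp_exp c1 c2 c3 0 _ ?_) (exp_exp c1 c2 c3 3 _ ?_) ?_
      · simp [dfun]; try push_cast; try ring
      · simp [dfun]; try push_cast; try ring
      · rw [hc2]; ring
  · -- family 3 : c3 = π/2 - c2, use ψ = (1/2)(1,1,-1,-1)
    set c3 : ℝ := Real.pi / 2 - c2 with hc3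
    refine ⟨![1/2,1/2,-(1/2),-(1/2)], ?_, ?_, ?_⟩
    · simp [Fin.sum_univ_four]
      try norm_num
    · rw [ent_eq]; simp; try ring
    · rw [agate_eq, entU3]
      refine abs_goal' _ _ (-(c1+c2+c3)) (-c1+c2+c3)
        (exp_exp c1 c2 c3 2 _ ?_) (exp_exp c1 c2 c3 3 _ ?_) ?_
      · simp [dfun]; try push_cast; try ring
      · simp [dfun]; try push_cast; try ring
      · rw [hc3]; ring
end
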